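/- Let γ > 0. With S(0,y) = ∫_0^y e^{-1/z}·z/(1−z) dz and K(z) = (1/γ)·e^{1/z}·(2 − 2/z + 1/z²), the mean excitation time T̄(y) = S(0,y)·(K(y) − K(1)) = S(0,y)·(K(y) − e/γ) satisfies T̄(y) → 0 as y → 0⁺ and T̄(y) → 0 as y → 1⁻; moreover T̄(y) > 0 for all y ∈ (0,1). -/

import Mathlib

/-- Heterodyne scale density Q(z) = e^{-1/z}·z/(1−z). -/
noncomputable def Qhet (z : ℝ) : ℝ := Real.exp (-1 / z) * z / (1 - z)

/-- Heterodyne scale integral S(0,y) = ∫_0^y Q(z) dz. -/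
noncomputable def Shet0 (y : ℝ) : ℝ := ∫ z in (0 : ℝ)..y, Qhet z

/-- Heterodyne function K(z) = (1/γ)e^{1/z}(2 − 2/z + 1/z²). -/
noncomputable def Khet (γ z : ℝ) : ℝ :=
  (1 / γ) * Real.exp (1 / z) * (2 - 2 / z + 1 / z ^ 2)



/-!
Substituting u = 1/y, γ·K(y) = e^u (u² − 2u + 2) has u-derivative e^u u² > 0, so
K(y) > K(1) on (0,1) and T̄ > 0 there. Bounding Q by derivatives of explicit functions gives
S(0,y) ≤ −log(1 − y) and, since Q(z) = z³/(1 − z) · (e^{−1/z})′, also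
S(0,y) ≤ y³e^{−1/y}/(1 − y). Near 0 the factor e^{−1/y} cancels the e^{1/y} in K, so
T̄(y) ≤ y(2y² − 2y + 1)/(γ(1 − y)).
Near 1, T̄(y) = −S(0,y)(1 − y) · slope K 1 y, where the slope tends to K′(1) and
0 ≤ S(0,y)(1 − y) ≤ −(1 − y) log(1 − y) → 0.
-/

open Real Set Filter Topology

lemma continuous_expNegInvGlue : Continuous expNegInvGlue :=
  (expNegInvGlue.contDiff (n := 0)).continuous

lemma hasDerivAt_expNegInvGlue {z : ℝ} (hz : 0 < z) :
    HasDerivAt expNegInvGlue (exp (-1 / z) / z ^ 2) z := by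
  have hexp : HasDerivAt (fun x => exp (-x⁻¹)) (exp (-z⁻¹) * -(-(z ^ 2)⁻¹)) z :=
    ((hasDerivAt_inv hz.ne').neg).exp
  refine (hexp.congr_deriv (by field_simp)).congr_of_eventuallyEq ?_
  filter_upwards [lt_mem_nhds hz] with x hx
  simp [expNegInvGlue, not_le.2 hx]

lemma eqOn_qhet_expNegInvGlue :
    EqOn Qhet (fun z => expNegInvGlue z * z / (1 - z)) (Ici 0) := by
  intro z hz
  rcases (mem_Ici.1 hz).eq_or_lt with rfl | hz
  · simp [Qhet]
  · simp [Qhet, expNegInvGlue, not_le.2 hz, neg_div]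

lemma continuousOn_qhet {y : ℝ} (hy : y < 1) : ContinuousOn Qhet (Icc 0 y) := by
  refine ContinuousOn.congr ?_ (eqOn_qhet_expNegInvGlue.mono Icc_subset_Ici_self)
  refine (continuous_expNegInvGlue.mul continuous_id).continuousOn.div
    (by fun_prop) fun z hz => ?_
  linarith [hz.2]

lemma qhet_pos {z : ℝ} (h0 : 0 < z) (h1 : z < 1) : 0 < Qhet z := by
  have : 0 < 1 - z := by linarith
  unfold Qhet; positivity

lemma shet0_pos {y : ℝ} (h0 : 0 < y) (h1 : y < 1) : 0 < Shet0 y :=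
  intervalIntegral.intervalIntegral_pos_of_pos_on
    ((continuousOn_qhet h1).intervalIntegrable_of_Icc h0.le)
    (fun _ hz => qhet_pos hz.1 (hz.2.trans h1)) h0

lemma shet0_le_neg_log {y : ℝ} (h0 : 0 < y) (h1 : y < 1) : Shet0 y ≤ -log (1 - y) := by
  have key := intervalIntegral.integral_le_sub_of_hasDeriv_right_of_le h0.le
    (g := fun z => -log (1 - z)) (g' := fun z => 1 / (1 - z))
    (ContinuousOn.log (by fun_prop) fun z hz => by linarith [hz.2]).neg
    (fun z hz => ?_) ((continuousOn_qhet h1).integrableOn_Icc) fun z hz => ?_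
  · simpa [Shet0] using key
  · have hz1 : 1 - z ≠ 0 := by linarith [hz.2]
    exact (((hasDerivAt_id z).const_sub 1).log hz1).neg.hasDerivWithinAt.congr_deriv
      (by simp [div_eq_inv_mul])
  · have hz1 : 0 < 1 - z := by linarith [hz.2]
    have hexp : exp (-1 / z) ≤ 1 := exp_le_one_iff.2 (div_nonpos_of_nonpos_of_nonneg
      (by norm_num) hz.1.le)
    exact div_le_div_of_nonneg_right (mul_le_one₀ hexp hz.1.le (by linarith)) hz1.le

lemma shet0_le_pow_mul_exp {y : ℝ} (h0 : 0 < y) (h1 : y < 1) :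
    Shet0 y ≤ y ^ 3 / (1 - y) * exp (-1 / y) := by
  have key := intervalIntegral.integral_le_sub_of_hasDeriv_right_of_le h0.le
    (g := fun z => y ^ 3 / (1 - y) * expNegInvGlue z)
    (g' := fun z => y ^ 3 / (1 - y) * (exp (-1 / z) / z ^ 2))
    (continuous_const.mul continuous_expNegInvGlue).continuousOn
    (fun z hz => ((hasDerivAt_expNegInvGlue hz.1).const_mul _).hasDerivWithinAt)
    ((continuousOn_qhet h1).integrableOn_Icc) ?_
  · simpa [Shet0, expNegInvGlue, not_le.2 h0, neg_div] using key
  · intro z hz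
    have hz1 : 0 < 1 - z := by linarith [hz.2]
    have : Qhet z = z ^ 3 / (1 - z) * (exp (-1 / z) / z ^ 2) := by
      unfold Qhet; field_simp
    rw [this]
    gcongr <;> linarith [hz.1, hz.2]

lemma strictMonoOn_exp_mul_quadratic :
    StrictMonoOn (fun u => exp u * (u ^ 2 - 2 * u + 2)) (Ici 0) := by
  have hderiv (u : ℝ) : HasDerivAt (fun u => exp u * (u ^ 2 - 2 * u + 2)) (exp u * u ^ 2) u := by
    refine ((hasDerivAt_exp u).mul (((hasDerivAt_pow 2 u).sub
      ((hasDerivAt_id u).const_mul 2)).add_const 2)).congr_deriv ?_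
    simp only [Pi.sub_apply, id_eq]; ring
  refine strictMonoOn_of_deriv_pos (convex_Ici 0) (by fun_prop) fun u hu => ?_
  rw [interior_Ici, mem_Ioi] at hu
  rw [(hderiv u).deriv]
  positivity

lemma khet_eq_exp_mul_quadratic (γ z : ℝ) :
    Khet γ z = (1 / γ) * (exp (1 / z) * ((1 / z) ^ 2 - 2 * (1 / z) + 2)) := by
  unfold Khet; ring

lemma exp_one_div_lt_khet {γ y : ℝ} (hγ : 0 < γ) (h0 : 0 < y) (h1 : y < 1) :
    exp 1 / γ < Khet γ y := by
  have hu : 1 < 1 / y := by rw [lt_div_iff₀ h0]; linarith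
  have := strictMonoOn_exp_mul_quadratic (a := 1) (b := 1 / y) (by norm_num)
    (mem_Ici.2 (by linarith)) hu
  have hexp1 : exp 1 = exp 1 * (1 ^ 2 - 2 * 1 + 2) := by norm_num
  rw [khet_eq_exp_mul_quadratic, div_eq_inv_mul, one_div, hexp1]
  exact mul_lt_mul_of_pos_left this (inv_pos.2 hγ)

lemma khet_one (γ : ℝ) : Khet γ 1 = exp 1 / γ := by
  norm_num [Khet, div_eq_inv_mul]

lemma shet0_mul_khet_le {γ y : ℝ} (hγ : 0 < γ) (h0 : 0 < y) (h1 : y < 1) :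
    Shet0 y * Khet γ y ≤ y * (2 * y ^ 2 - 2 * y + 1) / (γ * (1 - y)) := by
  have hK : 0 ≤ Khet γ y := (div_pos (exp_pos 1) hγ).le.trans (exp_one_div_lt_khet hγ h0 h1).le
  have hexp : exp (-1 / y) * exp (1 / y) = 1 := by
    rw [← exp_add, neg_div, neg_add_cancel, exp_zero]
  have h1y : 1 - y ≠ 0 := by linarith
  calc Shet0 y * Khet γ y ≤ y ^ 3 / (1 - y) * exp (-1 / y) * Khet γ y :=
        mul_le_mul_of_nonneg_right (shet0_le_pow_mul_exp h0 h1) hK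
    _ = y ^ 3 / (1 - y) * (exp (-1 / y) * exp (1 / y)) * (2 - 2 / y + 1 / y ^ 2) / γ := by
        unfold Khet; ring
    _ = y * (2 * y ^ 2 - 2 * y + 1) / (γ * (1 - y)) := by
        rw [hexp]; field_simp

lemma tendsto_shet0_mul_one_sub_nhdsLT_one :
    Tendsto (fun y => Shet0 y * (1 - y)) (𝓝[<] 1) (𝓝 0) := by
  have hmem : Ioo (0 : ℝ) 1 ∈ 𝓝[<] 1 := Ioo_mem_nhdsLT zero_lt_one
  have hlim : Tendsto (fun y : ℝ => negMulLog (1 - y)) (𝓝[<] 1) (𝓝 0) :=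
    ((continuous_negMulLog.comp (continuous_sub_left 1)).tendsto' 1 0 (by simp)).mono_left
      nhdsWithin_le_nhds
  refine squeeze_zero' ?_ ?_ hlim
  · filter_upwards [hmem] with y hy
    exact (mul_pos (shet0_pos hy.1 hy.2) (sub_pos.2 hy.2)).le
  · filter_upwards [hmem] with y hy
    have := mul_le_mul_of_nonneg_right (shet0_le_neg_log hy.1 hy.2) (sub_pos.2 hy.2).le
    rw [negMulLog]
    linarith

noncomputable def hetMeanTime (γ y : ℝ) : ℝ := Shet0 y * (Khet γ y - exp 1 / γ)

lemma hetMeanTime_pos {γ y : ℝ} (hγ : 0 < γ) (h0 : 0 < y) (h1 : y < 1) :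
    0 < hetMeanTime γ y :=
  mul_pos (shet0_pos h0 h1) (sub_pos.2 (exp_one_div_lt_khet hγ h0 h1))

lemma tendsto_hetMeanTime_nhdsGT_zero {γ : ℝ} (hγ : 0 < γ) :
    Tendsto (hetMeanTime γ) (𝓝[>] 0) (𝓝 0) := by
  have hmem : Ioo (0 : ℝ) 1 ∈ 𝓝[>] 0 := Ioo_mem_nhdsGT zero_lt_one
  have hlim :
      Tendsto (fun y => y * (2 * y ^ 2 - 2 * y + 1) / (γ * (1 - y))) (𝓝[>] 0) (𝓝 0) := by
    have : ContinuousAt (fun y => y * (2 * y ^ 2 - 2 * y + 1) / (γ * (1 - y))) 0 := by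
      fun_prop (disch := simp [hγ.ne'])
    simpa using this.tendsto.mono_left nhdsWithin_le_nhds
  refine squeeze_zero' ?_ ?_ hlim
  · filter_upwards [hmem] with y hy
    exact (hetMeanTime_pos hγ hy.1 hy.2).le
  · filter_upwards [hmem] with y hy
    refine le_trans ?_ (shet0_mul_khet_le hγ hy.1 hy.2)
    exact mul_le_mul_of_nonneg_left (sub_le_self _ (by positivity)) (shet0_pos hy.1 hy.2).le

lemma tendsto_hetMeanTime_nhdsLT_one (γ : ℝ) : Tendsto (hetMeanTime γ) (𝓝[<] 1) (𝓝 0) := by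
  have hK : DifferentiableAt ℝ (Khet γ) 1 := by
    unfold Khet; fun_prop (disch := norm_num)
  have hslope : Tendsto (slope (Khet γ) 1) (𝓝[<] 1) (𝓝 (deriv (Khet γ) 1)) :=
    (hasDerivWithinAt_iff_tendsto_slope' self_notMem_Iio).1 hK.hasDerivAt.hasDerivWithinAt
  have := tendsto_shet0_mul_one_sub_nhdsLT_one.neg.mul hslope
  rw [neg_zero, zero_mul] at this
  refine this.congr' ?_
  filter_upwards [self_mem_nhdsWithin] with y (hy : y < 1)
  have : y - 1 ≠ 0 := by linarith
  rw [hetMeanTime, slope_def_field, khet_one]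
  field_simp
  ring

/-- The mean excitation time T̄(y) = S(0,y)·(K(y) − K(1)) = S(0,y)·(K(y) − e/γ)
under heterodyne detection tends to 0 as y → 0⁺ and as y → 1⁻, and is
strictly positive on (0,1). -/
theorem het_mean_excitation_time (γ : ℝ) (hγ : 0 < γ) :
    let T : ℝ → ℝ := fun y => Shet0 y * (Khet γ y - Real.exp 1 / γ)
    Filter.Tendsto T (nhdsWithin 0 (Set.Ioi 0)) (nhds 0) ∧
    Filter.Tendsto T (nhdsWithin 1 (Set.Iio 1)) (nhds 0) ∧
    ∀ y ∈ Set.Ioo (0 : ℝ) 1, 0 < T y :=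
  ⟨tendsto_hetMeanTime_nhdsGT_zero hγ, tendsto_hetMeanTime_nhdsLT_one γ,
    fun _ hy => hetMeanTime_pos hγ hy.1 hy.2⟩
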